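/- arXiv:1210.2873 — 4 statements merged into one kernel-verified Lean document; each statement's English description precedes it below -/
import Mathlib

section
/- Let G be a finitely generated group containing a finitely generated normal subgroup C such that for every descending chain of finite-index subgroups of C with trivial intersection the rank gradient of C is zero. Let (H_i) be a descending chain of finite-index normal subgroups of G with (⋂ H_i) ∩ C = 1. Then lim (d(H_i) - 1)/[G : H_i] = 0. -/
/-!
Put `K i = H i ∩ C`, `n i = [C : K i]` and `m i = [G : H i C]`; normality of `H i` gives
`[G : H i] = n i * m i`. The group `H i` is an extension of `K i` by `H i C / C`, a subgroup of
index `m i` of `G / C`, so Schreier's bound gives `d(H i) ≤ d(K i) + m i * d(G / C)`. Hence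
`|(d(H i) - 1) / [G : H i]| ≤ |(d(K i) - 1) / n i| + (d(G / C) + 1) / n i`. The first term tends
to `0` by hypothesis, the second because `n i → ∞`: the `K i` form a descending chain with trivial
intersection in `C`, and `C` is infinite, since a finite `C` would have rank gradient `-1 / |C|`
along the constant chain `1`.
-/

open Filter

/-- `ngen G` is `d(G)`, the minimal number of generators of the group `G`. -/
noncomputable def ngen (G : Type*) [Group G] : ℕ :=
  sInf {n | ∃ S : Finset G, S.card = n ∧ Subgroup.closure (S : Set G) = ⊤}

theorem ngen_eq_rank (G : Type*) [Group G] [Group.FG G] : ngen G = Group.rank G := by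
  refine le_antisymm (Nat.sInf_le (Group.rank_spec G)) ?_
  obtain ⟨S, hS, hS_top⟩ := Nat.sInf_mem (⟨_, Group.rank_spec G⟩ :
    {n | ∃ S : Finset G, S.card = n ∧ Subgroup.closure (S : Set G) = ⊤}.Nonempty)
  exact (Group.rank_le hS_top).trans_eq hS

def Subgroup.subgroupOfCommEquiv {G : Type*} [Group G] (H K : Subgroup G) :
    H.subgroupOf K ≃* K.subgroupOf H where
  toFun x := ⟨⟨x.1, x.2⟩, x.1.2⟩
  invFun x := ⟨⟨x.1, x.2⟩, x.1.2⟩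
  map_mul' _ _ := rfl

theorem Group.rank_le_rank_ker_add_rank_range {G Q : Type*} [Group G] [Group Q] [Group.FG G]
    (f : G →* Q) [Group.FG f.ker] :
    Group.rank G ≤ Group.rank f.ker + Group.rank f.range := by
  classical
  obtain ⟨S, hS, hS_top⟩ := Group.rank_spec f.ker
  obtain ⟨T, hT, hT_top⟩ := Group.rank_spec f.range
  choose g hg using fun t : f.range => t.2
  set U : Finset G := S.image Subtype.val ∪ T.image g
  have hker : f.ker ≤ Subgroup.closure (U : Set G) := by
    rw [← f.ker.range_subtype, MonoidHom.range_eq_map, ← hS_top, MonoidHom.map_closure]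
    exact Subgroup.closure_mono (by simp [U])
  have hrange : f.range ≤ (Subgroup.closure (U : Set G)).map f := by
    rw [← f.range.range_subtype, MonoidHom.range_eq_map, ← hT_top, MonoidHom.map_closure,
      Subgroup.closure_le]
    rintro _ ⟨t, ht, rfl⟩
    exact ⟨g t, Subgroup.subset_closure (Finset.mem_union_right _ (Finset.mem_image_of_mem g ht)),
      hg t⟩
  have hU_top : Subgroup.closure (U : Set G) = ⊤ := by
    rw [eq_top_iff, ← f.comap_range_self]
    refine (Subgroup.comap_mono hrange).trans ?_
    rw [Subgroup.comap_map_eq, sup_eq_left.mpr hker]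
  calc Group.rank G ≤ U.card := Group.rank_le hU_top
    _ ≤ S.card + T.card := (Finset.card_union_le _ _).trans
        (add_le_add Finset.card_image_le Finset.card_image_le)
    _ = _ := by rw [hS, hT]

theorem Subgroup.index_eq_index_subgroupOf_mul_index_sup {G : Type*} [Group G]
    (H C : Subgroup G) [H.Normal] : H.index = (H.subgroupOf C).index * (H ⊔ C).index := by
  rw [← Subgroup.relIndex_mul_index (le_sup_left : H ≤ H ⊔ C), Subgroup.relIndex_sup_left]
  rfl

theorem Subgroup.rank_le_rank_subgroupOf_add_index_sup_mul_rank {G : Type*} [Group G]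
    [Group.FG G] (C : Subgroup G) [C.Normal] [Group.FG C] (H : Subgroup G) [H.FiniteIndex] :
    Group.rank H ≤ Group.rank (H.subgroupOf C) + (H ⊔ C).index * Group.rank (G ⧸ C) := by
  set f := (QuotientGroup.mk' C).comp H.subtype
  have hker : f.ker = C.subgroupOf H := by
    rw [← MonoidHom.comap_ker, QuotientGroup.ker_mk']
    rfl
  have hidx : f.range.index = (H ⊔ C).index := by
    rw [MonoidHom.range_comp, Subgroup.range_subtype, Subgroup.index_map, QuotientGroup.ker_mk',
      QuotientGroup.range_mk', Subgroup.index_top, mul_one]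
  have : (H ⊔ C).FiniteIndex := Subgroup.finiteIndex_of_le le_sup_left
  have : f.range.FiniteIndex := ⟨hidx ▸ Subgroup.FiniteIndex.index_ne_zero⟩
  have : Group.FG (C.subgroupOf H) :=
    Group.fg_of_surjective (f := (H.subgroupOfCommEquiv C).toMonoidHom)
      (H.subgroupOfCommEquiv C).surjective
  have : Group.FG f.ker := hker ▸ this
  calc Group.rank H ≤ Group.rank f.ker + Group.rank f.range :=
        Group.rank_le_rank_ker_add_rank_range f
    _ = Group.rank (H.subgroupOf C) + Group.rank f.range := by
        rw [Subgroup.rank_congr hker, Group.rank_congr (H.subgroupOfCommEquiv C)]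
    _ ≤ _ := add_le_add le_rfl (hidx ▸ Subgroup.rank_le_index_mul_rank f.range)

theorem Subgroup.tendsto_index_atTop {G : Type*} [Group G] [Infinite G] {K : ℕ → Subgroup G}
    (hK : Antitone K) [∀ i, (K i).FiniteIndex] (hbot : ⨅ i, K i = ⊥) :
    Tendsto (fun i => (K i).index) atTop atTop := by
  have hdrop : ∀ i, ∃ j, (K i).index < (K j).index := by
    intro i
    have hne : K i ≠ ⊥ := fun h => Subgroup.FiniteIndex.index_ne_zero (H := K i) <| by
      rw [h, Subgroup.index_bot, Nat.card_eq_zero_of_infinite]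
    obtain ⟨j, hij⟩ : ∃ j, ¬ K i ≤ K j := by
      by_contra! h
      exact hne (eq_bot_iff.mpr (hbot ▸ le_iInf h))
    have hji : K j ≤ K i := hK ((le_total i j).resolve_right fun h => hij (hK h))
    exact ⟨j, Subgroup.index_strictAnti (lt_of_le_of_ne hji fun h => hij h.ge)⟩
  refine tendsto_atTop_atTop_of_monotone (fun i j h => Subgroup.index_antitone (hK h)) ?_
  intro b
  induction b with
  | zero => exact ⟨0, Nat.zero_le _⟩
  | succ b ih =>
    obtain ⟨i, hi⟩ := ih
    obtain ⟨j, hj⟩ := hdrop i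
    exact ⟨j, by omega⟩

theorem abs_sub_one_div_mul_le {d d' n m r : ℝ} (hd : 0 ≤ d) (hn : 0 < n) (hm : 1 ≤ m)
    (hr : 0 ≤ r) (h : d ≤ d' + m * r) :
    |(d - 1) / (n * m)| ≤ |(d' - 1) / n| + (r + 1) / n := by
  have hd' : d' - 1 ≤ n * |(d' - 1) / n| := by
    rw [abs_div, abs_of_pos hn, mul_div_cancel₀ _ hn.ne']
    exact le_abs_self _
  have habs : 0 ≤ |(d' - 1) / n| := abs_nonneg _
  have hsum : |(d' - 1) / n| + (r + 1) / n = (n * |(d' - 1) / n| + r + 1) / n := by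
    field_simp
    ring
  generalize |(d' - 1) / n| = a at *
  rw [hsum, abs_le, ← neg_div]
  constructor
  · rw [div_le_div_iff₀ hn (by positivity)]
    nlinarith [mul_nonneg (add_nonneg (mul_nonneg hn.le habs) hr) (zero_le_one.trans hm)]
  · rw [div_le_div_iff₀ (by positivity) hn]
    nlinarith [mul_nonneg (mul_nonneg hn.le habs) (sub_nonneg.2 hm)]

theorem not_tendsto_rank_gradient_bot (G : Type*) [Group G] [Finite G] :
    ¬ Tendsto (fun _ : ℕ => ((ngen (⊥ : Subgroup G) : ℝ) - 1) / (⊥ : Subgroup G).index)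
      atTop (nhds 0) := by
  intro h
  simp only [ngen_eq_rank, Group.rank_eq_zero, Subgroup.index_bot] at h
  exact div_ne_zero (by norm_num) (by exact_mod_cast Nat.card_pos.ne')
    (tendsto_nhds_unique tendsto_const_nhds h)

/-- If a finitely generated group `G` has a finitely generated normal subgroup `C` whose
rank gradient vanishes with respect to every descending chain of finite-index subgroups
with trivial intersection, then for every descending chain `(H i)` of finite-index normal
subgroups of `G` with `(⋂ H i) ∩ C = 1` we have `lim (d(H i) - 1)/[G : H i] = 0`. -/
theorem rank_gradient_zero_of_normal_subgroup {G : Type*} [Group G] [Group.FG G]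
    (C : Subgroup G) [C.Normal] [Group.FG ↥C]
    (hC : ∀ K : ℕ → Subgroup ↥C, (∀ i, K (i + 1) ≤ K i) → (∀ i, (K i).index ≠ 0) →
      (⨅ i, K i) = ⊥ →
      Tendsto (fun i => ((ngen ↥(K i) : ℝ) - 1) / ((K i).index : ℝ)) atTop (nhds 0))
    (H : ℕ → Subgroup G) (hchain : ∀ i, H (i + 1) ≤ H i) (hnorm : ∀ i, (H i).Normal)
    (hfin : ∀ i, (H i).index ≠ 0) (hint : (⨅ i, H i) ⊓ C = ⊥) :
    Tendsto (fun i => ((ngen ↥(H i) : ℝ) - 1) / ((H i).index : ℝ)) atTop (nhds 0) := by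
  have hH_fin (i : ℕ) : (H i).FiniteIndex := ⟨hfin i⟩
  set K : ℕ → Subgroup C := fun i => (H i).subgroupOf C
  have hK_anti : Antitone K :=
    antitone_nat_of_succ_le fun i => Subgroup.subgroupOf_mono C (hchain i)
  have hK_bot : ⨅ i, K i = ⊥ := by
    rw [show ⨅ i, K i = (⨅ i, H i).subgroupOf C from (Subgroup.comap_iInf _ _).symm,
      Subgroup.subgroupOf_eq_bot]
    exact disjoint_iff.mpr hint
  have hK_grad := hC K (fun i => hK_anti i.le_succ) (fun i => Subgroup.FiniteIndex.index_ne_zero)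
    hK_bot
  have : Infinite C := by
    by_contra hC_fin
    rw [not_infinite_iff_finite] at hC_fin
    exact not_tendsto_rank_gradient_bot C
      (hC _ (fun _ => le_rfl) (fun _ => Subgroup.FiniteIndex.index_ne_zero) iInf_const)
  have hK_inv : Tendsto (fun i => ((K i).index : ℝ)⁻¹) atTop (nhds 0) :=
    (tendsto_natCast_atTop_atTop.comp
      (Subgroup.tendsto_index_atTop hK_anti hK_bot)).inv_tendsto_atTop
  set r := Group.rank (G ⧸ C)
  refine squeeze_zero_norm
    (a := fun i => |((ngen (K i) : ℝ) - 1) / (K i).index| + ((r : ℝ) + 1) / (K i).index)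
    (fun i => ?_) ?_
  · rw [Real.norm_eq_abs, Subgroup.index_eq_index_subgroupOf_mul_index_sup (H i) C]
    push_cast
    refine abs_sub_one_div_mul_le (Nat.cast_nonneg _) ?_ ?_ (Nat.cast_nonneg _) ?_
    · exact_mod_cast Nat.pos_of_ne_zero Subgroup.FiniteIndex.index_ne_zero
    · exact_mod_cast Nat.one_le_iff_ne_zero.mpr
        (Subgroup.finiteIndex_of_le le_sup_left).index_ne_zero
    · rw [ngen_eq_rank, ngen_eq_rank]
      exact_mod_cast Subgroup.rank_le_rank_subgroupOf_add_index_sup_mul_rank C (H i)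
  · simpa only [abs_zero, zero_add, mul_zero, div_eq_mul_inv]
      using hK_grad.abs.add (hK_inv.const_mul ((r : ℝ) + 1))
end

section
/- Let G be a finitely generated group whose center contains an element of infinite order, and let (H_i) be a descending chain of finite-index normal subgroups of G with trivial intersection. Then the rank gradient RG(G, (H_i)) = lim (d(H_i)-1)/[G:H_i] equals 0. -/
open Filter

namespace Group

variable {G : Type*} [Group G]

theorem exists_closure_singleton_eq_top [IsCyclic G] :
    ∃ g : G, Subgroup.closure ({g} : Set G) = ⊤ := by
  obtain ⟨g, hg⟩ := isCyclic_iff_exists_zpowers_eq_top.mp ‹_›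
  exact ⟨g, Subgroup.zpowers_eq_closure g ▸ hg⟩

instance fg_of_isCyclic [IsCyclic G] : FG G :=
  let ⟨g, hg⟩ := exists_closure_singleton_eq_top (G := G)
  ⟨⟨{g}, by rwa [Finset.coe_singleton]⟩⟩

theorem rank_le_one_of_isCyclic [IsCyclic G] : rank G ≤ 1 := by
  obtain ⟨g, hg⟩ := exists_closure_singleton_eq_top (G := G)
  simpa using rank_le (S := {g}) (by rwa [Finset.coe_singleton])

theorem rank_le_rank_add_rank_quotient [FG G] (N : Subgroup G) [N.Normal] [FG N] :
    rank G ≤ rank N + rank (G ⧸ N) := by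
  classical
  obtain ⟨S, hS, hSgen⟩ := rank_spec N
  obtain ⟨T, hT, hTgen⟩ := rank_spec (G ⧸ N)
  set L := Subgroup.closure ((S.image N.subtype ∪ T.image Quotient.out : Finset G) : Set G)
  have hNL : N ≤ L := by
    rw [← N.range_subtype, MonoidHom.range_eq_map, ← hSgen, MonoidHom.map_closure,
      ← Finset.coe_image]
    exact Subgroup.closure_mono (Finset.coe_subset.mpr Finset.subset_union_left)
  have hLtop : L.map (QuotientGroup.mk' N) = ⊤ := by
    rw [eq_top_iff, ← hTgen, MonoidHom.map_closure]
    exact Subgroup.closure_mono fun q hq =>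
      ⟨q.out, Finset.mem_union_right _ (Finset.mem_image_of_mem _ hq), QuotientGroup.out_eq' q⟩
  -- `L` contains `N = ker mk'`, so it is the full preimage of its image `⊤`.
  have hL : L = ⊤ := by
    rw [← sup_eq_left.mpr hNL, ← QuotientGroup.ker_mk' N, ← Subgroup.comap_map_eq, hLtop,
      Subgroup.comap_top]
  calc rank G ≤ (S.image N.subtype ∪ T.image Quotient.out).card := rank_le hL
    _ ≤ S.card + T.card :=
      (Finset.card_union_le _ _).trans (add_le_add Finset.card_image_le Finset.card_image_le)
    _ = rank N + rank (G ⧸ N) := by rw [hS, hT]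

end Group

namespace Subgroup

variable {G : Type*} [Group G]

theorem normal_zpowers_of_mem_center {z : G} (hz : z ∈ center G) : (zpowers z).Normal :=
  ⟨fun n hn g => by
    rwa [mem_center_iff.mp (zpowers_le.mpr hz hn) g, mul_inv_cancel_right]⟩

theorem nontrivial_of_finiteIndex (K : Subgroup G) [K.FiniteIndex] {g : G}
    (hg : ¬IsOfFinOrder g) : Nontrivial K := by
  obtain ⟨n, hn, -, hgn⟩ :=
    exists_pow_mem_of_index_ne_zero (FiniteIndex.index_ne_zero (H := K)) g
  exact K.nontrivial_iff_exists_ne_one.mpr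
    ⟨g ^ n, hgn, orderOf_eq_zero_iff'.mp (orderOf_eq_zero hg) n hn⟩

instance isCyclic_subgroupOf (C K : Subgroup G) [IsCyclic C] : IsCyclic (C.subgroupOf K) :=
  isCyclic_of_injective ((K.subtype.comp (C.subgroupOf K).subtype).codRestrict C fun x => x.2)
    fun _ _ h => Subtype.ext <| Subtype.ext <| congrArg (fun c : C => (c : G)) h

theorem rank_le_one_add_index_sup_mul_rank [Group.FG G] (C : Subgroup G) [C.Normal] [IsCyclic C]
    (K : Subgroup G) [K.FiniteIndex] : Group.rank K ≤ 1 + (K ⊔ C).index * Group.rank G := by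
  have : (K ⊔ C).FiniteIndex := finiteIndex_of_le le_sup_left
  have hquot : Group.rank (K ⧸ C.subgroupOf K) ≤ Group.rank ↥(K ⊔ C) :=
    calc Group.rank (K ⧸ C.subgroupOf K)
        = Group.rank (↥(K ⊔ C) ⧸ C.subgroupOf (K ⊔ C)) :=
          Group.rank_congr (QuotientGroup.quotientInfEquivProdNormalQuotient K C)
      _ ≤ Group.rank ↥(K ⊔ C) :=
          Group.rank_le_of_surjective _ (QuotientGroup.mk'_surjective _)
  calc Group.rank K ≤ Group.rank (C.subgroupOf K) + Group.rank (K ⧸ C.subgroupOf K) :=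
        Group.rank_le_rank_add_rank_quotient _
    _ ≤ 1 + (K ⊔ C).index * Group.rank G :=
        add_le_add Group.rank_le_one_of_isCyclic (hquot.trans (rank_le_index_mul_rank _))

theorem rank_sub_one_div_index_le [Group.FG G] (C : Subgroup G) [C.Normal] [IsCyclic C]
    (K : Subgroup G) [K.FiniteIndex] :
    ((Group.rank K : ℝ) - 1) / K.index ≤ Group.rank G / K.relIndex (K ⊔ C) := by
  have hidx : (K.index : ℝ) = K.relIndex (K ⊔ C) * (K ⊔ C).index := by
    exact_mod_cast (relIndex_mul_index le_sup_left).symm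
  have hrank : (Group.rank K : ℝ) - 1 ≤ (K ⊔ C).index * Group.rank G := by
    have := rank_le_one_add_index_sup_mul_rank C K
    push_cast [← Nat.cast_le (α := ℝ)] at this
    linarith
  have : (K ⊔ C).FiniteIndex := finiteIndex_of_le le_sup_left
  have hi : (0 : ℝ) < (K ⊔ C).index := by exact_mod_cast FiniteIndex.index_ne_zero.bot_lt
  rw [hidx, mul_comm, ← div_div]
  gcongr
  rwa [div_le_iff₀' hi]

theorem eventually_notMem_of_antitone {ι : Type*} [Preorder ι] {H : ι → Subgroup G}
    (hH : Antitone H) (hbot : ⨅ i, H i = ⊥) {g : G} (hg : g ≠ 1) :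
    ∀ᶠ i in atTop, g ∉ H i := by
  have : g ∉ ⨅ i, H i := by rwa [hbot, mem_bot]
  obtain ⟨i₀, hi₀⟩ := not_forall.mp (mt mem_iInf.mpr this)
  filter_upwards [eventually_ge_atTop i₀] with i hi using fun hgi => hi₀ (hH hi hgi)

theorem tendsto_relIndex_sup_atTop {H : ℕ → Subgroup G} (hH : Antitone H)
    (hbot : ⨅ i, H i = ⊥) [∀ i, (H i).FiniteIndex] {C : Subgroup G} {z : G} (hzC : z ∈ C)
    (hz : ¬IsOfFinOrder z) :
    Tendsto (fun i => (H i).relIndex (H i ⊔ C)) atTop atTop := by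
  refine tendsto_atTop.mpr fun b => ?_
  have hpow : ∀ n ∈ Finset.range b, ∀ᶠ i in atTop, z ^ (n + 1) ∉ H i := fun n _ =>
    eventually_notMem_of_antitone hH hbot <|
      orderOf_eq_zero_iff'.mp (orderOf_eq_zero hz) _ n.succ_pos
  filter_upwards [(Finset.eventually_all _).mpr hpow] with i hi
  obtain ⟨n, hn, hnr, hmem⟩ := exists_pow_mem_of_relIndex_ne_zero
    (isFiniteRelIndex_of_finiteIndex (H := H i) (K := H i ⊔ C)).relIndex_ne_zero
    (mem_sup_right hzC)
  by_contra! hlt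
  obtain ⟨m, rfl⟩ := Nat.exists_eq_add_of_lt hn
  exact hi m (Finset.mem_range.mpr (by omega)) (by simpa using hmem.1)

end Subgroup

theorem rank_gradient_zero_of_infinite_center_general {G : Type*} [Group G] [Group.FG G]
    (z : G) (hz : z ∈ Subgroup.center G) (hord : ¬ IsOfFinOrder z)
    (H : ℕ → Subgroup G) (hchain : ∀ i, H (i + 1) ≤ H i)
    (hfin : ∀ i, (H i).index ≠ 0) (hint : (⨅ i, H i) = ⊥) :
    Tendsto (fun i => ((ngen ↥(H i) : ℝ) - 1) / ((H i).index : ℝ)) atTop (nhds 0) := by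
  have := Subgroup.normal_zpowers_of_mem_center hz
  have (i : ℕ) : (H i).FiniteIndex := ⟨hfin i⟩
  have hlower (i : ℕ) : 0 ≤ ((ngen (H i) : ℝ) - 1) / (H i).index := by
    have := (H i).nontrivial_of_finiteIndex hord
    rw [ngen_eq_rank]
    exact div_nonneg (sub_nonneg.mpr (Nat.one_le_cast.mpr (Group.rank_pos _))) (Nat.cast_nonneg _)
  have hupper (i : ℕ) : ((ngen (H i) : ℝ) - 1) / (H i).index ≤
      Group.rank G / (H i).relIndex (H i ⊔ Subgroup.zpowers z) :=
    ngen_eq_rank (H i) ▸ Subgroup.rank_sub_one_div_index_le _ _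
  have hrelIndex := Subgroup.tendsto_relIndex_sup_atTop (antitone_nat_of_succ_le hchain) hint
    (Subgroup.mem_zpowers z) hord
  exact tendsto_of_tendsto_of_tendsto_of_le_of_le tendsto_const_nhds
    (tendsto_const_nhds.div_atTop (tendsto_natCast_atTop_atTop.comp hrelIndex)) hlower hupper

/-- If a finitely generated group `G` has a central element of infinite order, then the
rank gradient of `G` with respect to any descending chain of finite-index normal
subgroups with trivial intersection is `0`. -/
theorem rank_gradient_zero_of_infinite_center {G : Type*} [Group G] [Group.FG G]
    (z : G) (hz : z ∈ Subgroup.center G) (hord : ¬ IsOfFinOrder z)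
    (H : ℕ → Subgroup G) (hchain : ∀ i, H (i + 1) ≤ H i) (hnorm : ∀ i, (H i).Normal)
    (hfin : ∀ i, (H i).index ≠ 0) (hint : (⨅ i, H i) = ⊥) :
    Tendsto (fun i => ((ngen ↥(H i) : ℝ) - 1) / ((H i).index : ℝ)) atTop (nhds 0) :=
  rank_gradient_zero_of_infinite_center_general z hz hord H hchain hfin hint
end

section
/- If G₁ and G₂ are residually finite groups, then for the free product G = G₁ * G₂, the finite-residual satisfies G₁ ∩ G₀ = (G₁)₀ and G₂ ∩ G₀ = (G₂)₀, where X₀ denotes the intersection of all finite-index subgroups of X. In particular, a free product of residually finite groups is residually finite. -/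
/-- The finite residual of a group: the intersection of all its finite-index subgroups.
A group `G` is residually finite iff `finResidual G = ⊥`. -/
def finResidual (G : Type*) [Group G] : Subgroup G :=
  ⨅ (H : Subgroup G) (_ : H.index ≠ 0), H

/-!
Let `g ≠ 1` in a free product, with reduced word `g₁ ⋯ gₙ`. Residual finiteness of the factors
gives finite quotients of the factors in which every letter `gₖ` survives, so the image of `g` in
the free product of these quotients is still a nonempty reduced word. A free product of finitely
many finite groups acts on the finite set of reduced words of length `≤ n`: each factor acts as
usual on the orbits lying inside this set and trivially on the rest. Building `g` letter by letter
from the empty word never leaves the set, so `g` moves the empty word.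

Since `G₁` is a retract of `G₁ ∗ G₂`, every finite-index subgroup of `G₁` is the trace of one of
`G₁ ∗ G₂`, which gives `G₁ ∩ G₀ = (G₁)₀`.
-/

section FinResidual

variable {G H : Type*} [Group G] [Group H]

theorem mem_finResidual {x : G} : x ∈ finResidual G ↔ ∀ K : Subgroup G, K.index ≠ 0 → x ∈ K := by
  simp only [finResidual, Subgroup.mem_iInf]

theorem finResidual_eq_bot_iff : finResidual G = ⊥ ↔ Group.ResiduallyFinite G := by
  simp only [Group.residuallyFinite_iff_forall_finiteIndex, Subgroup.eq_bot_iff_forall,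
    mem_finResidual, Subgroup.finiteIndex_iff]

theorem finResidual_le_comap (f : G →* H) : finResidual G ≤ (finResidual H).comap f := by
  intro x hx
  refine mem_finResidual.mpr fun K hK => mem_finResidual.mp hx (K.comap f) ?_
  simpa using Subgroup.relIndex_comap_ne_zero f (K := ⊤) (by simpa using hK)

theorem comap_finResidual_of_comp_eq_id {s : G →* H} {r : H →* G}
    (hrs : r.comp s = MonoidHom.id G) : (finResidual H).comap s = finResidual G :=
  le_antisymm
    (calc (finResidual H).comap s ≤ ((finResidual G).comap r).comap s :=
          Subgroup.comap_mono (finResidual_le_comap r)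
      _ = finResidual G := by rw [Subgroup.comap_comap, hrs, Subgroup.comap_id])
    (finResidual_le_comap s)

end FinResidual

namespace Group

variable {G H : Type*} [Group G] [Group H]

theorem ResiduallyFinite.of_injective [ResiduallyFinite H] {f : G →* H}
    (hf : Function.Injective f) : ResiduallyFinite G := by
  refine residuallyFinite_iff_exists_finiteIndexNormalSubgroup.mpr fun g hg => ?_
  obtain ⟨K, hK⟩ := exists_finiteIndexNormalSubgroup_notMem (f g) ((map_ne_one_iff f hf).mpr hg)
  exact ⟨K.comap f, hK⟩

instance [ResiduallyFinite G] : ResiduallyFinite (ULift G) :=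
  .of_injective (f := (MulEquiv.ulift : ULift G ≃* G).toMonoidHom) MulEquiv.ulift.injective

theorem exists_finiteIndexNormalSubgroup_forall_notMem [ResiduallyFinite G] {S : Set G}
    (hS : S.Finite) (h1 : 1 ∉ S) : ∃ N : FiniteIndexNormalSubgroup G, ∀ s ∈ S, s ∉ N := by
  have (s : S) : ∃ N : FiniteIndexNormalSubgroup G, (s : G) ∉ N :=
    exists_finiteIndexNormalSubgroup_notMem (s : G) (ne_of_mem_of_not_mem s.2 h1)
  choose N hN using this
  have : Finite S := hS.to_subtype
  have : (⨅ s, (N s).toSubgroup).Normal := Subgroup.normal_iInf_normal fun s => inferInstance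
  have : (⨅ s, (N s).toSubgroup).FiniteIndex := Subgroup.finiteIndex_iInf fun s => inferInstance
  exact ⟨.ofSubgroup (⨅ s, (N s).toSubgroup), fun s hs hsN =>
    hN ⟨s, hs⟩ (Subgroup.mem_iInf.mp hsN ⟨s, hs⟩)⟩

end Group

namespace MulAction

variable (G : Type*) {α : Type*} [Group G] [MulAction G α]

open scoped Classical in
noncomputable def orbitRestrictedSMul (T : Set α) (g : G) (x : T) : T :=
  if h : ∀ k : G, k • (x : α) ∈ T then ⟨g • x, h g⟩ else x

variable {G} {T : Set α}

theorem orbitRestrictedSMul_of_forall {x : T} (h : ∀ k : G, k • (x : α) ∈ T) (g : G) :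
    orbitRestrictedSMul G T g x = ⟨g • x, h g⟩ :=
  dif_pos h

theorem orbitRestrictedSMul_of_not_forall {x : T} (h : ¬∀ k : G, k • (x : α) ∈ T) (g : G) :
    orbitRestrictedSMul G T g x = x :=
  dif_neg h

variable (G T) in
/-- An action because the set of points whose orbit lies in `T` is `G`-invariant. -/
noncomputable def toPermHomOn : G →* Equiv.Perm T :=
  letI : MulAction G T :=
    { smul := orbitRestrictedSMul G T
      one_smul x := by
        by_cases h : ∀ k : G, k • (x : α) ∈ T
        · exact (orbitRestrictedSMul_of_forall h 1).trans (Subtype.ext (one_smul G (x : α)))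
        · exact orbitRestrictedSMul_of_not_forall h 1
      mul_smul g k x := by
        change orbitRestrictedSMul G T _ _ = orbitRestrictedSMul G T _ (orbitRestrictedSMul G T _ _)
        by_cases h : ∀ k : G, k • (x : α) ∈ T
        · have h' : ∀ l : G, l • k • (x : α) ∈ T := fun l => by rw [← mul_smul]; exact h _
          rw [orbitRestrictedSMul_of_forall h, orbitRestrictedSMul_of_forall h,
            orbitRestrictedSMul_of_forall h']
          exact Subtype.ext (mul_smul g k (x : α))
        · rw [orbitRestrictedSMul_of_not_forall h, orbitRestrictedSMul_of_not_forall h,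
            orbitRestrictedSMul_of_not_forall h] }
  toPermHom G T

theorem toPermHomOn_apply_of_forall {x : α} (hx : x ∈ T) (h : ∀ k : G, k • x ∈ T) (g : G) :
    toPermHomOn G T g ⟨x, hx⟩ = ⟨g • x, h g⟩ :=
  orbitRestrictedSMul_of_forall h g

end MulAction

namespace Monoid.CoprodI

open Group

variable {ι : Type*} {G : ι → Type*} [∀ i, Group (G i)]

namespace Word

theorem prod_ne_one_of_ne_empty {w : Word G} (hw : w ≠ empty) : w.prod ≠ 1 := by
  classical
  intro h
  exact hw (by rw [← equiv.apply_symm_apply w]; exact congrArg equiv h)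

def map {H : ι → Type*} [∀ i, Group (H i)] (f : ∀ i, G i →* H i) (w : Word G)
    (hw : ∀ l ∈ w.toList, f l.1 l.2 ≠ 1) : Word H where
  toList := w.toList.map fun l => ⟨l.1, f l.1 l.2⟩
  ne_one := by
    simp only [List.mem_map]
    rintro _ ⟨l, hl, rfl⟩
    exact hw l hl
  chain_ne := List.isChain_map_of_isChain (fun l : Σ i, G i => (⟨l.1, f l.1 l.2⟩ : Σ i, H i))
    (fun _ _ h => h) w.chain_ne

theorem lift_prod_ne_one_of_forall_ne_one {H : ι → Type*} [∀ i, Group (H i)]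
    (f : ∀ i, G i →* H i) {w : Word G} (hw : w ≠ empty) (hf : ∀ l ∈ w.toList, f l.1 l.2 ≠ 1) :
    lift (fun i => of.comp (f i)) w.prod ≠ 1 := by
  have hprod : (w.map f hf).prod = lift (fun i => of.comp (f i)) w.prod := by
    simp [map, prod, map_list_prod, Function.comp_def]
  rw [← hprod]
  exact prod_ne_one_of_ne_empty fun h =>
    hw (Word.ext (List.map_eq_nil_iff.mp (congrArg Word.toList h)))

variable [DecidableEq ι] [∀ i, DecidableEq (G i)]

theorem length_smul_le_of_fstIdx_ne {i : ι} {w : Word G} (hw : w.fstIdx ≠ some i) (g : G i) :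
    (g • w).toList.length ≤ w.toList.length + 1 := by
  rw [smul_def, equivPair_eq_of_fstIdx_ne hw, rcons]
  split_ifs <;> simp

theorem lift_toPermHomOn_prod_empty (n : ℕ) (w : Word G) (hw : w.toList.length ≤ n) :
    lift (fun i => MulAction.toPermHomOn (G i) {v : Word G | v.toList.length ≤ n}) w.prod
      ⟨empty, Nat.zero_le n⟩ = ⟨w, hw⟩ := by
  induction w using consRecOn with
  | empty => simp
  | cons i g w hfst hg ih =>
    have hwn : w.toList.length < n := by simpa using hw
    rw [prod_cons, map_mul, Equiv.Perm.mul_apply, ih hwn.le, lift_of,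
      MulAction.toPermHomOn_apply_of_forall _
        fun k => (length_smul_le_of_fstIdx_ne hfst k).trans hwn]
    exact Subtype.ext (cons_eq_smul (h1 := hfst) (h2 := hg)).symm

end Word

theorem residuallyFinite_of_finite [Finite ι] [∀ i, Finite (G i)] :
    ResiduallyFinite (CoprodI G) := by
  classical
  refine residuallyFinite_of_forall_exists_finite_monoidHom fun g hg => ?_
  set n := (Word.equiv g).toList.length
  set T := {v : Word G | v.toList.length ≤ n}
  have : Finite T :=
    ((List.finite_length_le _ n).preimage fun v _ w _ h => Word.ext h).to_subtype
  refine ⟨Equiv.Perm T, inferInstance, inferInstance,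
    lift fun i => MulAction.toPermHomOn (G i) T, fun h => hg ?_⟩
  have hmove := Word.lift_toPermHomOn_prod_empty n (Word.equiv g) le_rfl
  rw [show (Word.equiv g).prod = g from Word.equiv.symm_apply_apply g, h] at hmove
  exact Word.equiv.injective (congrArg Subtype.val hmove).symm

instance residuallyFinite [Finite ι] [∀ i, ResiduallyFinite (G i)] :
    ResiduallyFinite (CoprodI G) := by
  classical
  refine residuallyFinite_iff_exists_finiteIndexNormalSubgroup.mpr fun g hg => ?_
  obtain ⟨w, rfl⟩ : ∃ w : Word G, w.prod = g :=
    ⟨Word.equiv g, Word.equiv.symm_apply_apply g⟩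
  have hsep (i : ι) : ∃ N : FiniteIndexNormalSubgroup (G i), ∀ x ∈ {x | ⟨i, x⟩ ∈ w.toList}, x ∉ N :=
    exists_finiteIndexNormalSubgroup_forall_notMem
      (w.toList.finite_toSet.preimage sigma_mk_injective.injOn) (w.ne_one ⟨i, 1⟩ · rfl)
  choose N hN using hsep
  let f (i : ι) : G i →* G i ⧸ (N i).toSubgroup := QuotientGroup.mk' _
  have hfg : lift (fun i => (of (M := fun i => G i ⧸ (N i).toSubgroup)).comp (f i)) w.prod ≠ 1 := by
    refine Word.lift_prod_ne_one_of_forall_ne_one f (fun h => hg (h ▸ Word.prod_empty)) ?_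
    rintro ⟨i, x⟩ hx
    simpa [f, FiniteIndexNormalSubgroup.mem_toSubgroup_iff] using hN i x hx
  have := residuallyFinite_of_finite (G := fun i => G i ⧸ (N i).toSubgroup)
  obtain ⟨K, hK⟩ := exists_finiteIndexNormalSubgroup_notMem _ hfg
  exact ⟨K.comap _, hK⟩

end Monoid.CoprodI

namespace Monoid.Coprod

open Group

universe u v

variable {G₁ : Type u} {G₂ : Type v} [Group G₁] [Group G₂]

variable (G₁ G₂) in
/-- `CoprodI` needs all factors in one universe. -/
def boolFamily : Bool → Type (max u v)
  | true => ULift.{v} G₁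
  | false => ULift.{u} G₂

instance : ∀ b, Group (boolFamily G₁ G₂ b)
  | true => inferInstanceAs (Group (ULift G₁))
  | false => inferInstanceAs (Group (ULift G₂))

instance [ResiduallyFinite G₁] [ResiduallyFinite G₂] :
    ∀ b, ResiduallyFinite (boolFamily G₁ G₂ b)
  | true => inferInstanceAs (ResiduallyFinite (ULift G₁))
  | false => inferInstanceAs (ResiduallyFinite (ULift G₂))

def toCoprodI : G₁ ∗ G₂ →* CoprodI (boolFamily G₁ G₂) :=
  lift ((CoprodI.of (i := true)).comp (MulEquiv.ulift.symm : G₁ ≃* ULift G₁).toMonoidHom)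
    ((CoprodI.of (i := false)).comp (MulEquiv.ulift.symm : G₂ ≃* ULift G₂).toMonoidHom)

def ofCoprodI : CoprodI (boolFamily G₁ G₂) →* G₁ ∗ G₂ :=
  CoprodI.lift fun
    | true => inl.comp (MulEquiv.ulift : ULift G₁ ≃* G₁).toMonoidHom
    | false => inr.comp (MulEquiv.ulift : ULift G₂ ≃* G₂).toMonoidHom

theorem ofCoprodI_comp_toCoprodI :
    (ofCoprodI (G₁ := G₁) (G₂ := G₂)).comp toCoprodI = MonoidHom.id _ := by
  ext <;> simp [toCoprodI, ofCoprodI] <;> rfl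

instance [ResiduallyFinite G₁] [ResiduallyFinite G₂] : ResiduallyFinite (G₁ ∗ G₂) :=
  .of_injective (f := toCoprodI) (Function.LeftInverse.injective
    (g := ofCoprodI) (DFunLike.congr_fun ofCoprodI_comp_toCoprodI))

end Monoid.Coprod

/-- If `G₁` and `G₂` are residually finite, then in the free product `G = G₁ * G₂` the
finite residual satisfies `G₁ ∩ G₀ = (G₁)₀` and `G₂ ∩ G₀ = (G₂)₀`; in particular the free
product of residually finite groups is residually finite. -/
theorem finResidual_coprod {G₁ G₂ : Type*} [Group G₁] [Group G₂]
    (h1 : finResidual G₁ = ⊥) (h2 : finResidual G₂ = ⊥) :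
    (finResidual (Monoid.Coprod G₁ G₂)).comap Monoid.Coprod.inl = finResidual G₁ ∧
    (finResidual (Monoid.Coprod G₁ G₂)).comap Monoid.Coprod.inr = finResidual G₂ ∧
    finResidual (Monoid.Coprod G₁ G₂) = ⊥ := by
  have := finResidual_eq_bot_iff.mp h1
  have := finResidual_eq_bot_iff.mp h2
  exact ⟨comap_finResidual_of_comp_eq_id Monoid.Coprod.fst_comp_inl,
    comap_finResidual_of_comp_eq_id Monoid.Coprod.snd_comp_inr,
    finResidual_eq_bot_iff.mpr inferInstance⟩
end

section
/- Let Γ be a connected labelled graph with at least 2 vertices and v a vertex whose removal disconnects Γ into components Γ₁, …, Γ_k. Then the Artin group A_Γ is the amalgamated product of the parabolic subgroups A_{Γ_j ∪ {v}} over the common cyclic subgroup A_v = ⟨a_v⟩, i.e. A_Γ ≅ A_{Γ₁∪{v}} *_{⟨a_v⟩} A_{Γ₂∪{v}} *_{⟨a_v⟩} ⋯ *_{⟨a_v⟩} A_{Γ_k∪{v}}. -/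
/-- The alternating word `a b a b ⋯` of length `n`. -/
def altWord {V : Type*} : FreeGroup V → FreeGroup V → ℕ → FreeGroup V
  | _, _, 0 => 1
  | a, b, n + 1 => a * altWord b a n

/-- The Artin relations of a labelled graph, encoded by a symmetric matrix of labels
`M : V → V → ℕ`: for each edge, i.e. each pair `v ≠ w` with label `M v w ≥ 2`, the
relation `(a_v a_w a_v ⋯) = (a_w a_v a_w ⋯)` (alternating words of length `M v w`). -/
def artinRels {V : Type*} (M : V → V → ℕ) : Set (FreeGroup V) :=
  {r | ∃ v w : V, v ≠ w ∧ 2 ≤ M v w ∧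
    r = altWord (FreeGroup.of v) (FreeGroup.of w) (M v w) *
        (altWord (FreeGroup.of w) (FreeGroup.of v) (M v w))⁻¹}

/-- The Artin group of a labelled graph. -/
abbrev ArtinGroup {V : Type*} (M : V → V → ℕ) : Type _ := PresentedGroup (artinRels M)

/-- The standard generator `a_v` of the Artin group. -/
abbrev ArtinGroup.gen {V : Type*} (M : V → V → ℕ) (v : V) : ArtinGroup M :=
  PresentedGroup.of v

/-- The simple graph underlying a labelled graph: `u ∼ w` iff `u ≠ w` and the label
`M u w` is at least `2`. -/
def labelGraph {V : Type*} (M : V → V → ℕ) : SimpleGraph V :=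
  SimpleGraph.fromRel (fun u w => 2 ≤ M u w)

/-- The connected components of `Γ ∖ {v}`. -/
abbrev cutComponents {V : Type*} (M : V → V → ℕ) (v : V) : Type _ :=
  ((labelGraph M).induce {w : V | w ≠ v}).ConnectedComponent

/-- The vertex set `Γⱼ ∪ {v}` of the component `c` of `Γ ∖ {v}`, together with `v`. -/
def compVerts {V : Type*} (M : V → V → ℕ) (v : V) (c : cutComponents M v) : Set V :=
  insert v {w : V | ∃ h : w ≠ v,
    ((labelGraph M).induce {w : V | w ≠ v}).connectedComponentMk ⟨w, h⟩ = c}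

/-- The labelling restricted to a set of vertices (full labelled subgraph). -/
def restrictM {V : Type*} (M : V → V → ℕ) (S : Set V) : ↥S → ↥S → ℕ :=
  fun a b => M a b

/-- For each component `c` of `Γ ∖ {v}`, the map of the infinite cyclic group
`A_v = ⟨a_v⟩ ≅ ℤ` into the parabolic `A_{Γⱼ ∪ {v}}`, sending `1 ↦ a_v`. -/
noncomputable def cutMaps {V : Type*} (M : V → V → ℕ) (v : V) :
    ∀ c : cutComponents M v,
      Multiplicative ℤ →* ArtinGroup (restrictM M (compVerts M v c)) :=
  fun c => zpowersHom _ (ArtinGroup.gen _ (⟨v, Set.mem_insert _ _⟩ : ↥(compVerts M v c)))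

section Aux

variable {V : Type*}

/-- Alternating word in an arbitrary monoid. -/
def altW {G : Type*} [Monoid G] : G → G → ℕ → G
  | _, _, 0 => 1
  | a, b, n + 1 => a * altW b a n

lemma altWord_eq_altW (a b : FreeGroup V) : ∀ n, altWord a b n = altW a b n := by
  have : ∀ n (a b : FreeGroup V), altWord a b n = altW a b n := by
    intro n
    induction n with
    | zero => intro a b; rfl
    | succ n ih => intro a b; simp only [altWord, altW, ih]
  exact fun n => this n a b

lemma map_altW {G H : Type*} [Monoid G] [Monoid H] (f : G →* H) (a b : G) (n : ℕ) :
    f (altW a b n) = altW (f a) (f b) n := by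
  induction n generalizing a b with
  | zero => simp [altW]
  | succ n ih => simp [altW, ih]

lemma artin_rel (M : V → V → ℕ) {u w : V} (huw : u ≠ w) (h2 : 2 ≤ M u w) :
    altW (ArtinGroup.gen M u) (ArtinGroup.gen M w) (M u w) *
      (altW (ArtinGroup.gen M w) (ArtinGroup.gen M u) (M u w))⁻¹ = 1 := by
  have h1 : (PresentedGroup.mk (artinRels M))
      (altWord (FreeGroup.of u) (FreeGroup.of w) (M u w) *
        (altWord (FreeGroup.of w) (FreeGroup.of u) (M u w))⁻¹) = 1 := by
    refine (QuotientGroup.eq_one_iff _).2 ?_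
    exact Subgroup.subset_normalClosure ⟨u, w, huw, h2, rfl⟩
  rw [map_mul, map_inv, altWord_eq_altW, altWord_eq_altW, map_altW, map_altW] at h1
  exact h1

lemma comp_eq_of_adj (M : V → V → ℕ) (v : V) {u w : V} (hu : u ≠ v) (hw : w ≠ v)
    (huw : u ≠ w) (h2 : 2 ≤ M u w) :
    ((labelGraph M).induce {w : V | w ≠ v}).connectedComponentMk ⟨u, hu⟩ =
    ((labelGraph M).induce {w : V | w ≠ v}).connectedComponentMk ⟨w, hw⟩ := by
  refine SimpleGraph.ConnectedComponent.sound (SimpleGraph.Adj.reachable ?_)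
  show ((labelGraph M).induce {w : V | w ≠ v}).Adj ⟨u, hu⟩ ⟨w, hw⟩
  simp only [SimpleGraph.induce, SimpleGraph.comap_adj, Function.Embedding.coe_subtype,
    labelGraph, SimpleGraph.fromRel_adj]
  exact ⟨huw, Or.inl h2⟩

lemma of_rel_one (M : V → V → ℕ) (v : V) (c : cutComponents M v)
    {u w : V} (hu : u ∈ compVerts M v c) (hw : w ∈ compVerts M v c)
    (huw : u ≠ w) (h2 : 2 ≤ M u w) :
    altW (Monoid.PushoutI.of (φ := cutMaps M v) c (ArtinGroup.gen _ ⟨u, hu⟩))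
        (Monoid.PushoutI.of (φ := cutMaps M v) c (ArtinGroup.gen _ ⟨w, hw⟩)) (M u w) *
      (altW (Monoid.PushoutI.of (φ := cutMaps M v) c (ArtinGroup.gen _ ⟨w, hw⟩))
        (Monoid.PushoutI.of (φ := cutMaps M v) c (ArtinGroup.gen _ ⟨u, hu⟩)) (M u w))⁻¹
      = 1 := by
  rw [← map_altW, ← map_altW, ← map_inv, ← map_mul]
  have h := artin_rel (restrictM M (compVerts M v c))
    (u := ⟨u, hu⟩) (w := ⟨w, hw⟩)
    (fun h => huw (congrArg Subtype.val h)) h2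
  have h' : restrictM M (compVerts M v c) ⟨u, hu⟩ ⟨w, hw⟩ = M u w := rfl
  rw [h'] at h
  rw [h, map_one]

end Aux

/-- If `v` is a cut vertex of the connected labelled graph `Γ` (with at least two
vertices), then `A_Γ` is the amalgamated product of the parabolic subgroups
`A_{Γⱼ ∪ {v}}`, over the components `Γⱼ` of `Γ ∖ {v}`, along the common infinite cyclic
subgroup `A_v = ⟨a_v⟩`, via an isomorphism matching the standard generators. -/
theorem artin_amalgam_of_cut_vertex {V : Type*} (M : V → V → ℕ)
    (hsym : ∀ u w, M u w = M w u) (hconn : (labelGraph M).Connected)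
    (hcard : 2 ≤ Nat.card V) (v : V)
    (hdisc : ¬ ((labelGraph M).induce {w : V | w ≠ v}).Connected) :
    ∃ e : ArtinGroup M ≃* Monoid.PushoutI (cutMaps M v),
      (∀ (w : V) (h : w ≠ v),
        e (ArtinGroup.gen M w) =
          Monoid.PushoutI.of (φ := cutMaps M v)
            (((labelGraph M).induce {w : V | w ≠ v}).connectedComponentMk ⟨w, h⟩)
            (ArtinGroup.gen _ ⟨w, Set.mem_insert_iff.mpr (Or.inr ⟨h, rfl⟩)⟩)) ∧
      e (ArtinGroup.gen M v) = Monoid.PushoutI.base (cutMaps M v)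
        (Multiplicative.ofAdd 1) := by
  classical
  set ind := (labelGraph M).induce {w : V | w ≠ v} with hind
  -- the forward generator map
  set F : V → Monoid.PushoutI (cutMaps M v) := fun w =>
    if h : w = v then Monoid.PushoutI.base (cutMaps M v) (Multiplicative.ofAdd 1)
    else Monoid.PushoutI.of (φ := cutMaps M v) (ind.connectedComponentMk ⟨w, h⟩)
      (ArtinGroup.gen _ ⟨w, Set.mem_insert_iff.mpr (Or.inr ⟨h, rfl⟩)⟩) with hFdef
  have hFv : F v = Monoid.PushoutI.base (cutMaps M v) (Multiplicative.ofAdd 1) := by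
    simp only [hFdef]; exact dif_pos trivial
  have hFne : ∀ (w : V) (h : w ≠ v), F w =
      Monoid.PushoutI.of (φ := cutMaps M v) (ind.connectedComponentMk ⟨w, h⟩)
        (ArtinGroup.gen _ ⟨w, Set.mem_insert_iff.mpr (Or.inr ⟨h, rfl⟩)⟩) := by
    intro w h
    simp only [hFdef]; exact dif_neg h
  have base_eq : ∀ c : cutComponents M v, ∀ (hv : v ∈ compVerts M v c),
      Monoid.PushoutI.base (cutMaps M v) (Multiplicative.ofAdd 1) =
        Monoid.PushoutI.of (φ := cutMaps M v) c (ArtinGroup.gen _ ⟨v, hv⟩) := by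
    intro c hv
    have h1 : cutMaps M v c (Multiplicative.ofAdd 1) = ArtinGroup.gen _ ⟨v, hv⟩ := by
      simp only [cutMaps, zpowersHom_apply, toAdd_ofAdd, zpow_one]
    rw [← h1, Monoid.PushoutI.of_apply_eq_base]
  have hFof : ∀ (c : cutComponents M v) (u : V) (hu : u ∈ compVerts M v c),
      F u = Monoid.PushoutI.of (φ := cutMaps M v) c (ArtinGroup.gen _ ⟨u, hu⟩) := by
    intro c u hu
    by_cases h : u = v
    · subst h
      rw [hFv]
      exact base_eq c hu
    · rw [hFne u h]
      rcases Set.mem_insert_iff.mp hu with h' | h'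
      · exact absurd h' h
      · obtain ⟨h'', hc⟩ := h'
        subst hc
        rfl
  -- relation check for the forward map
  have hF : ∀ r ∈ artinRels M, FreeGroup.lift F r = 1 := by
    rintro r ⟨u, w, huw, h2, rfl⟩
    rw [map_mul, map_inv, altWord_eq_altW, altWord_eq_altW, map_altW, map_altW,
      FreeGroup.lift_apply_of, FreeGroup.lift_apply_of]
    -- find a common component containing both u and w
    obtain ⟨c, hu, hw⟩ : ∃ c : cutComponents M v,
        u ∈ compVerts M v c ∧ w ∈ compVerts M v c := by
      by_cases hu : u = v
      · have hw : w ≠ v := fun h => huw (hu.trans h.symm)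
        exact ⟨ind.connectedComponentMk ⟨w, hw⟩,
          Set.mem_insert_iff.mpr (Or.inl hu),
          Set.mem_insert_iff.mpr (Or.inr ⟨hw, rfl⟩)⟩
      · by_cases hw : w = v
        · exact ⟨ind.connectedComponentMk ⟨u, hu⟩,
            Set.mem_insert_iff.mpr (Or.inr ⟨hu, rfl⟩),
            Set.mem_insert_iff.mpr (Or.inl hw)⟩
        · exact ⟨ind.connectedComponentMk ⟨u, hu⟩,
            Set.mem_insert_iff.mpr (Or.inr ⟨hu, rfl⟩),
            Set.mem_insert_iff.mpr (Or.inr ⟨hw, comp_eq_of_adj M v hw hu huw.symm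
              (by rw [hsym w u]; exact h2)⟩)⟩
    rw [hFof c u hu, hFof c w hw]
    exact of_rel_one M v c hu hw huw h2
  set fwd : ArtinGroup M →* Monoid.PushoutI (cutMaps M v) :=
    PresentedGroup.toGroup hF with hfwd
  -- backward maps
  have hG : ∀ c : cutComponents M v, ∀ r ∈ artinRels (restrictM M (compVerts M v c)),
      FreeGroup.lift (fun u : ↥(compVerts M v c) => ArtinGroup.gen M u.val) r = 1 := by
    rintro c r ⟨u, w, huw, h2, rfl⟩
    rw [map_mul, map_inv, altWord_eq_altW, altWord_eq_altW, map_altW, map_altW,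
      FreeGroup.lift_apply_of, FreeGroup.lift_apply_of]
    exact artin_rel M (fun h => huw (Subtype.ext h)) h2
  set bwd : Monoid.PushoutI (cutMaps M v) →* ArtinGroup M :=
    Monoid.PushoutI.lift (fun c => PresentedGroup.toGroup (hG c))
      (zpowersHom _ (ArtinGroup.gen M v)) (by
        intro c
        refine MonoidHom.ext_mint ?_
        simp [cutMaps, zpowersHom_apply]) with hbwd
  have h₁ : bwd.comp fwd = MonoidHom.id _ := by
    refine PresentedGroup.ext fun x => ?_
    show bwd (fwd (ArtinGroup.gen M x)) = ArtinGroup.gen M x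
    rw [hfwd]
    rw [PresentedGroup.toGroup.of]
    by_cases h : x = v
    · subst h
      rw [hFv, hbwd, Monoid.PushoutI.lift_base]
      simp only [zpowersHom_apply, toAdd_ofAdd, zpow_one]
    · rw [hFne x h, hbwd, Monoid.PushoutI.lift_of, PresentedGroup.toGroup.of]
  have h₂ : fwd.comp bwd = MonoidHom.id _ := by
    refine Monoid.PushoutI.hom_ext (fun c => ?_) ?_
    · refine PresentedGroup.ext fun x => ?_
      obtain ⟨u, hu⟩ := x
      show fwd (bwd (Monoid.PushoutI.of (φ := cutMaps M v) c (ArtinGroup.gen _ ⟨u, hu⟩)))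
        = Monoid.PushoutI.of (φ := cutMaps M v) c (ArtinGroup.gen _ ⟨u, hu⟩)
      rw [hbwd, Monoid.PushoutI.lift_of, PresentedGroup.toGroup.of, hfwd,
        PresentedGroup.toGroup.of]
      exact hFof c u hu
    · refine MonoidHom.ext_mint ?_
      show fwd (bwd (Monoid.PushoutI.base (cutMaps M v) (Multiplicative.ofAdd 1)))
        = Monoid.PushoutI.base (cutMaps M v) (Multiplicative.ofAdd 1)
      rw [hbwd, Monoid.PushoutI.lift_base]
      simp only [zpowersHom_apply, toAdd_ofAdd, zpow_one]
      rw [hfwd, PresentedGroup.toGroup.of, hFv]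
  refine ⟨MonoidHom.toMulEquiv fwd bwd h₁ h₂, fun w h => ?_, ?_⟩
  · show fwd (ArtinGroup.gen M w) = _
    rw [hfwd, PresentedGroup.toGroup.of]
    exact hFof _ w _
  · show fwd (ArtinGroup.gen M v) = _
    rw [hfwd, PresentedGroup.toGroup.of, hFv]
end
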